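/- For every m with 1 ≤ m ≤ ⌊4n/3⌋, there exists a nonempty subset S of the vertices of the even cycle C_{2n} such that |C_S(C_{2n})| = m. -/

import Mathlib

/-!
On `C_{2n}` every vertex `v` has a unique vertex at distance `n`, its antipode `v + n`, and all
other vertices are at distance at most `n - 1`. Let `S` be the complement of a nonempty set `F`
containing no three cyclically consecutive vertices. Then one of `v + n - 1, v + n, v + n + 1` lies
in `S`, so the `S`-eccentricity of `v` is `n` or `n - 1` according as `v + n` lies in `S` or in `F`,
and the `S`-center is the translate `F - n`, with `|F|` vertices. Taking two vertices out of every
three, `{0, 1, 3, 4, 6, 7, …}` cut off after `m` elements, gives such an `F` for every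
`m ≤ ⌊4n/3⌋`: it never contains the last vertex `2n - 1`, so no run of three wraps around `0`.
-/

/-- The `S`-eccentricity of a vertex `v`. -/
noncomputable def sEcc {V : Type*} (G : SimpleGraph V) (S : Finset V) (v : V) : ℕ :=
  S.sup fun x => G.dist v x

/-- The `S`-center of `G`. -/
noncomputable def sCenter {V : Type*} (G : SimpleGraph V) (S : Finset V) : Set V :=
  {v | ∀ w, sEcc G S v ≤ sEcc G S w}

/-- `A` is a center set of `G` if it is the `S`-center for some nonempty set `S`. -/
def IsCenterSet {V : Type*} (G : SimpleGraph V) (A : Set V) : Prop :=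
  ∃ S : Finset V, S.Nonempty ∧ sCenter G S = A

open SimpleGraph Finset
open Fin.CommRing

section Antipodal

variable {V : Type*} {G : SimpleGraph V} {D : ℕ} {σ : V → V} {S : Finset V} {v : V}

lemma sEcc_eq_of_antipode_mem (hσ : ∀ v, G.dist v (σ v) = D + 1)
    (hlt : ∀ v x, x ≠ σ v → G.dist v x ≤ D) (hv : σ v ∈ S) : sEcc G S v = D + 1 := by
  refine le_antisymm (Finset.sup_le fun x _ => ?_) ((hσ v).symm.trans_le (le_sup hv))
  by_cases hx : x = σ v
  · rw [hx, hσ]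
  · exact (hlt v x hx).trans D.le_succ

lemma sEcc_eq_of_antipode_notMem (hlt : ∀ v x, x ≠ σ v → G.dist v x ≤ D) (hv : σ v ∉ S)
    {x : V} (hx : x ∈ S) (hD : D ≤ G.dist v x) : sEcc G S v = D :=
  le_antisymm (Finset.sup_le fun _ hy => hlt v _ (ne_of_mem_of_not_mem hy hv))
    (hD.trans (le_sup (f := fun x => G.dist v x) hx))

theorem sCenter_eq_setOf_antipode_notMem (hσ : ∀ v, G.dist v (σ v) = D + 1)
    (hlt : ∀ v x, x ≠ σ v → G.dist v x ≤ D) (hS : ∀ v, ∃ x ∈ S, D ≤ G.dist v x)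
    (hσS : ∃ v, σ v ∉ S) : sCenter G S = {v | σ v ∉ S} := by
  have hecc : ∀ v, σ v ∉ S → sEcc G S v = D := fun v hv => by
    obtain ⟨x, hx, hD⟩ := hS v
    exact sEcc_eq_of_antipode_notMem hlt hv hx hD
  obtain ⟨w, hw⟩ := hσS
  ext v
  refine ⟨fun h hv => ?_, fun hv u => ?_⟩
  · have := h w
    rw [sEcc_eq_of_antipode_mem hσ hlt hv, hecc w hw] at this
    omega
  · by_cases hu : σ u ∈ S
    · rw [hecc v hv, sEcc_eq_of_antipode_mem hσ hlt hu]
      exact D.le_succ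
    · rw [hecc v hv, hecc u hu]

end Antipodal

namespace Fin

/-- The distance from `0` to `a` around the cycle `Fin N`. -/
def cycAbs {N : ℕ} (a : Fin N) : ℕ := min a.val (N - a.val)

variable {N : ℕ}

lemma cycAbs_add_le (a b : Fin N) : (a + b).cycAbs ≤ a.cycAbs + b.cycAbs := by
  have := val_add_eq_ite a b
  have := a.isLt
  have := b.isLt
  unfold cycAbs
  split_ifs at * <;> omega

lemma cycAbs_sub_comm (a b : Fin N) : (a - b).cycAbs = (b - a).cycAbs := by
  have h₁ := intCast_val_sub_eq_sub_add_ite a b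
  have h₂ := intCast_val_sub_eq_sub_add_ite b a
  have := (a - b).isLt
  have := (b - a).isLt
  unfold cycAbs
  split_ifs at h₁ h₂ <;> omega

lemma cycAbs_natCast [NeZero N] {t : ℕ} (ht : t < N) : (t : Fin N).cycAbs = min t (N - t) := by
  rw [cycAbs, val_cast_of_lt ht]

lemma val_add_natCast_of_add_lt [NeZero N] {v : Fin N} {t : ℕ} (h : v.val + t < N) :
    (v + (t : Fin N)).val = v.val + t := by
  have ht : (t : Fin N).val = t := val_cast_of_lt (by omega)
  rw [val_add_eq_of_add_lt (by rwa [ht]), ht]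

lemma exists_add_natCast_notMem [NeZero N] {F : Finset (Fin N)}
    (hF : ∀ x ∈ F, x.val % 3 ≠ 2 ∧ x.val + 1 ≠ N) (v : Fin N) :
    ∃ t : ℕ, t < 3 ∧ v + (t : Fin N) ∉ F := by
  obtain ⟨t, ht, hlt, hx⟩ :
      ∃ t < 3, v.val + t < N ∧ ((v.val + t) % 3 = 2 ∨ v.val + t + 1 = N) := by
    by_cases h : v.val + 2 < N
    · exact ⟨(5 - v.val % 3) % 3, by omega, by omega, by omega⟩
    · exact ⟨N - 1 - v.val, by omega, by omega, by omega⟩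
  refine ⟨t, ht, fun hmem => ?_⟩
  have := hF _ hmem
  rw [val_add_natCast_of_add_lt hlt] at this
  omega

lemma exists_finset_card_eq_of_three_mul_le {m : ℕ} (hm : 3 * m ≤ 2 * N) :
    ∃ F : Finset (Fin N), F.card = m ∧ ∀ x ∈ F, x.val % 3 ≠ 2 ∧ x.val + 1 ≠ N := by
  refine ⟨univ.image fun i : Fin m => ⟨3 * (i / 2) + i % 2, by omega⟩, ?_, ?_⟩
  · refine (card_image_of_injective _ fun i j hij => Fin.ext ?_).trans (card_fin m)
    have := congrArg Fin.val hij
    dsimp only at this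
    omega
  · simp only [mem_image, mem_univ, true_and, forall_exists_index]
    rintro _ i rfl
    dsimp only
    omega

end Fin

namespace SimpleGraph

variable {N k : ℕ}

lemma cycAbs_sub_le_one_of_adj {u v : Fin N} (h : (cycleGraph N).Adj u v) :
    (v - u).cycAbs ≤ 1 := by
  rw [cycleGraph_adj'] at h
  rcases h with h | h
  · rw [Fin.cycAbs_sub_comm, Fin.cycAbs, h]
    omega
  · rw [Fin.cycAbs, h]
    omega

lemma cycAbs_sub_le_length [NeZero N] {u v : Fin N} (p : (cycleGraph N).Walk u v) :
    (v - u).cycAbs ≤ p.length := by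
  induction p with
  | nil => simp [Fin.cycAbs]
  | @cons u x v h p ih =>
    calc (v - u).cycAbs = ((v - x) + (x - u)).cycAbs := by rw [sub_add_sub_cancel]
      _ ≤ (v - x).cycAbs + (x - u).cycAbs := Fin.cycAbs_add_le _ _
      _ ≤ p.length + 1 := add_le_add ih (cycAbs_sub_le_one_of_adj h)

lemma cycleGraph_dist_add_one_le [NeZero N] (v : Fin N) : (cycleGraph N).dist v (v + 1) ≤ 1 := by
  obtain _ | _ | N := N
  · exact v.elim0
  · simp
  · exact (dist_eq_one_iff_adj.2 (cycleGraph_adj.2 (.inr (add_sub_cancel_left v 1)))).le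

lemma cycleGraph_dist_add_natCast_le [NeZero N] (u : Fin N) (t : ℕ) :
    (cycleGraph N).dist u (u + t) ≤ t := by
  induction t with
  | zero => simp
  | succ t ih =>
    calc (cycleGraph N).dist u (u + (t + 1 : ℕ))
        ≤ (cycleGraph N).dist u (u + t) + (cycleGraph N).dist (u + t) (u + t + 1) := by
          rw [Nat.cast_succ, ← add_assoc]
          exact (cycleGraph_preconnected u _).dist_triangle_left _
      _ ≤ t + 1 := add_le_add ih (cycleGraph_dist_add_one_le _)

theorem cycleGraph_dist (u v : Fin N) : (cycleGraph N).dist u v = (v - u).cycAbs := by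
  have := u.neZero
  refine le_antisymm ?_ ?_
  · have h₁ := cycleGraph_dist_add_natCast_le u (v - u).val
    have h₂ := cycleGraph_dist_add_natCast_le v (u - v).val
    rw [Fin.cast_val_eq_self, add_sub_cancel] at h₁ h₂
    rw [dist_comm] at h₂
    have h₃ := Fin.intCast_val_sub_eq_sub_add_ite u v
    have h₄ := Fin.intCast_val_sub_eq_sub_add_ite v u
    have := (v - u).isLt
    unfold Fin.cycAbs
    split_ifs at h₃ h₄ <;> omega
  · obtain ⟨p, hp⟩ := (cycleGraph_preconnected u v).exists_walk_length_eq_dist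
    exact hp ▸ cycAbs_sub_le_length p

lemma cycleGraph_dist_add_half (v : Fin (2 * (k + 1))) :
    (cycleGraph (2 * (k + 1))).dist v (v + (k + 1 : ℕ)) = k + 1 := by
  rw [cycleGraph_dist, add_sub_cancel_left, Fin.cycAbs_natCast (by omega)]
  omega

lemma cycleGraph_dist_le_of_ne_add_half {v x : Fin (2 * (k + 1))} (hx : x ≠ v + (k + 1 : ℕ)) :
    (cycleGraph (2 * (k + 1))).dist v x ≤ k := by
  have hval : (x - v).val ≠ k + 1 := fun h =>
    hx (eq_add_of_sub_eq' (Fin.ext (by rw [h, Fin.val_cast_of_lt (by omega)])))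
  have := (x - v).isLt
  rw [cycleGraph_dist, Fin.cycAbs]
  omega

lemma le_cycleGraph_dist_add_natCast (v : Fin (2 * (k + 1))) {t : ℕ} (ht : t < 3) :
    k ≤ (cycleGraph (2 * (k + 1))).dist v (v + (k + t : ℕ)) := by
  rcases Nat.eq_zero_or_pos k with rfl | hk
  · exact Nat.zero_le _
  · rw [cycleGraph_dist, add_sub_cancel_left, Fin.cycAbs_natCast (by omega)]
    omega

theorem sCenter_cycleGraph_compl {F : Finset (Fin (2 * (k + 1)))} (hne : F.Nonempty)
    (hgap : ∀ v : Fin (2 * (k + 1)), ∃ t : ℕ, t < 3 ∧ v + (t : Fin _) ∉ F) :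
    sCenter (cycleGraph (2 * (k + 1))) Fᶜ = (· + ((k + 1 : ℕ) : Fin (2 * (k + 1)))) ⁻¹' F := by
  have := sCenter_eq_setOf_antipode_notMem (S := Fᶜ) cycleGraph_dist_add_half
    (fun _ _ => cycleGraph_dist_le_of_ne_add_half) ?_ ?_
  · rw [this]
    ext
    simp
  · intro v
    obtain ⟨t, ht, hvt⟩ := hgap (v + k)
    refine ⟨_, mem_compl.2 hvt, ?_⟩
    rw [add_assoc, ← Nat.cast_add]
    exact le_cycleGraph_dist_add_natCast v ht
  · obtain ⟨x, hx⟩ := hne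
    exact ⟨x - (k + 1 : ℕ), by simpa using hx⟩

end SimpleGraph

theorem exists_centerSet_card_evenCycle_general (n m : ℕ) (hm : 1 ≤ m)
    (hmn : m ≤ 4 * n / 3) :
    ∃ S : Finset (Fin (2 * n)), S.Nonempty ∧
      (sCenter (SimpleGraph.cycleGraph (2 * n)) S).ncard = m := by
  obtain ⟨k, rfl⟩ : ∃ k, n = k + 1 := ⟨n - 1, by omega⟩
  obtain ⟨F, hcard, hF⟩ :=
    Fin.exists_finset_card_eq_of_three_mul_le (N := 2 * (k + 1)) (by omega : 3 * m ≤ _)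
  have hgap := Fin.exists_add_natCast_notMem hF
  obtain ⟨t, -, ht⟩ := hgap 0
  refine ⟨Fᶜ, ⟨_, mem_compl.2 ht⟩, ?_⟩
  rw [sCenter_cycleGraph_compl (card_pos.1 (by omega)) hgap,
    Set.ncard_preimage_of_injective_subset_range (add_left_injective _)
      fun x _ => ⟨x - _, sub_add_cancel x _⟩,
    Set.ncard_coe_finset, hcard]

/-- For every `m` with `1 ≤ m ≤ ⌊4n/3⌋` there is a nonempty set `S` of vertices of the
even cycle `C_{2n}` whose `S`-center has exactly `m` vertices. -/
theorem exists_centerSet_card_evenCycle (n m : ℕ) (hn : 2 ≤ n) (hm : 1 ≤ m)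
    (hmn : m ≤ 4 * n / 3) :
    ∃ S : Finset (Fin (2 * n)), S.Nonempty ∧
      (sCenter (SimpleGraph.cycleGraph (2 * n)) S).ncard = m :=
  exists_centerSet_card_evenCycle_general n m hm hmn
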